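/- arXiv:0911.1564 — 3 statements merged into one kernel-verified Lean document; each statement's English description precedes it below -/
import Mathlib

section
/- For any n×p matrix Φ and positive integers k, k' with k + k' ≤ p, δ_{k+k'}(Φ) ≤ θ_{k,k'}(Φ) + max(δ_k(Φ), δ_{k'}(Φ)). -/
noncomputable def l2norm {p : ℕ} (c : Fin p → ℝ) : ℝ := Real.sqrt (∑ i, (c i)^2)

def IsSparse {p : ℕ} (k : ℕ) (c : Fin p → ℝ) : Prop :=
  (Finset.univ.filter (fun i => c i ≠ 0)).card ≤ k

/-- The restricted isometry constant `δ_k(Φ)`. -/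
noncomputable def ripConst {n p : ℕ} (Φ : Matrix (Fin n) (Fin p) ℝ) (k : ℕ) : ℝ :=
  sInf {δ : ℝ | 0 ≤ δ ∧ ∀ c : Fin p → ℝ, IsSparse k c →
    (1 - δ) * ∑ i, (c i)^2 ≤ (∑ i, (Φ.mulVec c i)^2) ∧
    (∑ i, (Φ.mulVec c i)^2) ≤ (1 + δ) * ∑ i, (c i)^2}

/-- The restricted orthogonality constant `θ_{k,k'}(Φ)`. -/
noncomputable def roConst {n p : ℕ} (Φ : Matrix (Fin n) (Fin p) ℝ) (k k' : ℕ) : ℝ :=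
  sInf {θ : ℝ | 0 ≤ θ ∧ ∀ c c' : Fin p → ℝ, IsSparse k c → IsSparse k' c' →
    (∀ i, c i = 0 ∨ c' i = 0) →
    |∑ i, (Φ.mulVec c i) * (Φ.mulVec c' i)| ≤ θ * l2norm c * l2norm c'}

/-!
Split a `(k + k')`-sparse vector `c` as `c₁ + c₂` with `c₁` `k`-sparse and `c₂` `k'`-sparse on
disjoint supports. Then `‖c‖² = ‖c₁‖² + ‖c₂‖²` and
`‖Φc‖² = ‖Φc₁‖² + ‖Φc₂‖² + 2⟨Φc₁, Φc₂⟩`; the first two terms are within `max(δ_k, δ_k')` of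
`‖c₁‖²` and `‖c₂‖²`, and the cross term is at most `θ_{k,k'} ‖c₁‖ ‖c₂‖ ≤ θ_{k,k'} ‖c‖² / 2`.
Both constants are attained, since their defining sets are closed, nonempty and bounded below.
-/

open Finset Matrix

section Sums

variable {ι R : Type*} [Fintype ι] [CommSemiring R]

theorem sum_add_sq (x y : ι → R) :
    ∑ i, (x i + y i) ^ 2 = ∑ i, x i ^ 2 + ∑ i, y i ^ 2 + 2 * ∑ i, x i * y i := by
  simp only [add_sq, sum_add_distrib, mul_sum, mul_assoc]
  ring

theorem sum_add_sq_of_disjoint {x y : ι → R} (h : ∀ i, x i = 0 ∨ y i = 0) :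
    ∑ i, (x i + y i) ^ 2 = ∑ i, x i ^ 2 + ∑ i, y i ^ 2 := by
  rw [← sum_add_distrib]
  exact sum_congr rfl fun i _ => by rcases h i with h | h <;> simp [h]

end Sums

theorem sum_sq_mulVec_le {m n : Type*} [Fintype m] [Fintype n] (Φ : Matrix m n ℝ) (c : n → ℝ) :
    ∑ i, (Φ *ᵥ c) i ^ 2 ≤ (∑ i, ∑ j, Φ i j ^ 2) * ∑ j, c j ^ 2 := by
  rw [sum_mul]
  exact sum_le_sum fun i _ => by
    simpa [mulVec, dotProduct] using sum_mul_sq_le_sq_mul_sq univ (Φ i) c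

theorem two_mul_l2norm_mul_le {p : ℕ} (c c' : Fin p → ℝ) :
    2 * l2norm c * l2norm c' ≤ ∑ i, c i ^ 2 + ∑ i, c' i ^ 2 := by
  have h := two_mul_le_add_sq (l2norm c) (l2norm c')
  rwa [l2norm, l2norm, Real.sq_sqrt (by positivity), Real.sq_sqrt (by positivity)] at h

theorem isSparse_of_support_subset {p k : ℕ} {c : Fin p → ℝ} (T : Finset (Fin p))
    (hc : ∀ i, c i ≠ 0 → i ∈ T) (hT : #T ≤ k) : IsSparse k c :=
  (card_le_card fun i hi => hc i (mem_filter.1 hi).2).trans hT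

theorem IsSparse.exists_disjoint_add_eq {p k k' : ℕ} {c : Fin p → ℝ} (hc : IsSparse (k + k') c) :
    ∃ c₁ c₂ : Fin p → ℝ, IsSparse k c₁ ∧ IsSparse k' c₂ ∧ (∀ i, c₁ i = 0 ∨ c₂ i = 0) ∧
      c₁ + c₂ = c := by
  classical
  set S := univ.filter fun i => c i ≠ 0
  obtain ⟨T, hTS, hT⟩ := exists_subset_card_eq (min_le_right k #S)
  refine ⟨fun i => if i ∈ T then c i else 0, fun i => if i ∈ T then 0 else c i, ?_, ?_,
    fun i => by by_cases i ∈ T <;> simp [*], funext fun i => by by_cases i ∈ T <;> simp [*]⟩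
  · exact isSparse_of_support_subset T (fun i => by split_ifs <;> simp [*]) (hT ▸ min_le_left _ _)
  · refine isSparse_of_support_subset (S \ T) (fun i hi => ?_) ?_
    · split_ifs at hi with hiT
      · exact absurd rfl hi
      · exact mem_sdiff.2 ⟨mem_filter.2 ⟨mem_univ i, hi⟩, hiT⟩
    · have : #S ≤ k + k' := hc
      rw [card_sdiff_of_subset hTS]
      omega

variable {n p : ℕ} (Φ : Matrix (Fin n) (Fin p) ℝ)

/-- `ripConst Φ k` and `roConst Φ k k'` are by definition the infima of the bounds below. -/
def IsRIPBound (k : ℕ) (δ : ℝ) : Prop :=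
  0 ≤ δ ∧ ∀ c : Fin p → ℝ, IsSparse k c →
    (1 - δ) * ∑ i, (c i)^2 ≤ (∑ i, (Φ.mulVec c i)^2) ∧
    (∑ i, (Φ.mulVec c i)^2) ≤ (1 + δ) * ∑ i, (c i)^2

def IsROBound (k k' : ℕ) (θ : ℝ) : Prop :=
  0 ≤ θ ∧ ∀ c c' : Fin p → ℝ, IsSparse k c → IsSparse k' c' →
    (∀ i, c i = 0 ∨ c' i = 0) →
    |∑ i, (Φ.mulVec c i) * (Φ.mulVec c' i)| ≤ θ * l2norm c * l2norm c'

variable {Φ}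

theorem IsRIPBound.mono {k : ℕ} {δ δ' : ℝ} (h : IsRIPBound Φ k δ) (hδ : δ ≤ δ') :
    IsRIPBound Φ k δ' := by
  refine ⟨h.1.trans hδ, fun c hc => ?_⟩
  have hc0 : 0 ≤ ∑ i, c i ^ 2 := by positivity
  have := mul_le_mul_of_nonneg_right hδ hc0
  constructor <;> linarith [h.2 c hc]

theorem IsRIPBound.add {k k' : ℕ} {δ θ : ℝ} (h : IsRIPBound Φ k δ) (h' : IsRIPBound Φ k' δ)
    (hθ : IsROBound Φ k k' θ) : IsRIPBound Φ (k + k') (θ + δ) := by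
  refine ⟨add_nonneg hθ.1 h.1, fun c hc => ?_⟩
  obtain ⟨c₁, c₂, hc₁, hc₂, hdisj, rfl⟩ := hc.exists_disjoint_add_eq
  obtain ⟨hlo₁, hhi₁⟩ := h.2 c₁ hc₁
  obtain ⟨hlo₂, hhi₂⟩ := h'.2 c₂ hc₂
  obtain ⟨hcross_lo, hcross_hi⟩ := abs_le.1 (hθ.2 c₁ c₂ hc₁ hc₂ hdisj)
  have hcross := mul_le_mul_of_nonneg_left (two_mul_l2norm_mul_le c₁ c₂) hθ.1
  simp only [mulVec_add, Pi.add_apply, sum_add_sq, sum_add_sq_of_disjoint hdisj]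
  constructor <;> nlinarith

variable (Φ)

theorem isClosed_setOf_isRIPBound (k : ℕ) : IsClosed {δ | IsRIPBound Φ k δ} := by
  simp only [IsRIPBound, Set.ofPred_and, Set.ofPred_forall]
  exact isClosed_Ici.inter <| isClosed_iInter fun c => isClosed_iInter fun _ =>
    (isClosed_le (by fun_prop) continuous_const).inter (isClosed_le continuous_const (by fun_prop))

theorem isClosed_setOf_isROBound (k k' : ℕ) : IsClosed {θ | IsROBound Φ k k' θ} := by
  simp only [IsROBound, Set.ofPred_and, Set.ofPred_forall]
  exact isClosed_Ici.inter <| isClosed_iInter fun c => isClosed_iInter fun c' =>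
    isClosed_iInter fun _ => isClosed_iInter fun _ => isClosed_iInter fun _ =>
      isClosed_le continuous_const (by fun_prop)

theorem isRIPBound_sum_sq_add_one (k : ℕ) : IsRIPBound Φ k (∑ i, ∑ j, Φ i j ^ 2 + 1) := by
  refine ⟨by positivity, fun c _ => ⟨?_, ?_⟩⟩ <;>
    nlinarith [sum_sq_mulVec_le Φ c, (by positivity : 0 ≤ ∑ i, (Φ *ᵥ c) i ^ 2),
      (by positivity : 0 ≤ ∑ i, c i ^ 2), (by positivity : 0 ≤ ∑ i, ∑ j, Φ i j ^ 2)]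

theorem isROBound_sum_sq (k k' : ℕ) : IsROBound Φ k k' (∑ i, ∑ j, Φ i j ^ 2) := by
  set C := ∑ i, ∑ j, Φ i j ^ 2
  have hC : 0 ≤ C := by positivity
  have hΦ (c : Fin p → ℝ) : √(∑ i, (Φ *ᵥ c) i ^ 2) ≤ √C * l2norm c := by
    rw [l2norm, ← Real.sqrt_mul hC]
    exact Real.sqrt_le_sqrt (sum_sq_mulVec_le Φ c)
  refine ⟨hC, fun c c' _ _ _ => ?_⟩
  calc |∑ i, (Φ *ᵥ c) i * (Φ *ᵥ c') i|
      ≤ √(∑ i, (Φ *ᵥ c) i ^ 2) * √(∑ i, (Φ *ᵥ c') i ^ 2) := by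
        rw [← Real.sqrt_mul (by positivity)]
        exact Real.abs_le_sqrt (sum_mul_sq_le_sq_mul_sq _ _ _)
    _ ≤ (√C * l2norm c) * (√C * l2norm c') :=
        mul_le_mul (hΦ c) (hΦ c') (Real.sqrt_nonneg _) (by unfold l2norm; positivity)
    _ = C * l2norm c * l2norm c' := by
        rw [mul_mul_mul_comm, Real.mul_self_sqrt hC, mul_assoc]

theorem isRIPBound_ripConst (k : ℕ) : IsRIPBound Φ k (ripConst Φ k) :=
  (isClosed_setOf_isRIPBound Φ k).csInf_mem ⟨_, isRIPBound_sum_sq_add_one Φ k⟩ ⟨0, fun _ h => h.1⟩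

theorem isROBound_roConst (k k' : ℕ) : IsROBound Φ k k' (roConst Φ k k') :=
  (isClosed_setOf_isROBound Φ k k').csInf_mem ⟨_, isROBound_sum_sq Φ k k'⟩ ⟨0, fun _ h => h.1⟩

theorem ripConst_le_roConst_add_max_general (n p k k' : ℕ) (Φ : Matrix (Fin n) (Fin p) ℝ) :
    ripConst Φ (k + k') ≤ roConst Φ k k' + max (ripConst Φ k) (ripConst Φ k') :=
  csInf_le ⟨0, fun _ h => h.1⟩ <|
    ((isRIPBound_ripConst Φ k).mono (le_max_left _ _)).add
      ((isRIPBound_ripConst Φ k').mono (le_max_right _ _)) (isROBound_roConst Φ k k')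

theorem ripConst_le_roConst_add_max (n p k k' : ℕ) (Φ : Matrix (Fin n) (Fin p) ℝ)
    (hk : 0 < k) (hk' : 0 < k') (hp : k + k' ≤ p) :
    ripConst Φ (k + k') ≤ roConst Φ k k' + max (ripConst Φ k) (ripConst Φ k') :=
  ripConst_le_roConst_add_max_general n p k k' Φ
end

section
/- Square root lifting inequality: for any real a ≥ 1 and positive integers k, k' such that a·k' is an integer and k + a·k' ≤ p, the restricted orthogonality constants of an n×p matrix Φ satisfy θ_{k, a·k'}(Φ) ≤ √a · θ_{k,k'}(Φ). -/
/-!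
Let `T` be the support of an `m`-sparse `c'`. If `#T ≤ k'`, then `c'` is `k'`-sparse and
`1 ≤ √a`. Otherwise average over all `k'`-subsets `S ⊆ T`: every index of `T` lies in
`D = C(#T - 1, k' - 1)` of them, so `D • c' = ∑ S, c'|_S` and `∑ S, ‖c'|_S‖² = D ‖c'‖²`.
Each `⟨Φc, Φ c'|_S⟩` is bounded by `θ_{k,k'} ‖c‖ ‖c'|_S‖`, and Cauchy–Schwarz over the
`C(#T, k') = (#T / k') D` subsets gives `∑ S, ‖c'|_S‖ ≤ √(#T / k') D ‖c'‖`, with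
`#T / k' ≤ m / k' = a`.
-/

open Finset Matrix Function

lemma Nat.choose_mul_eq_mul_choose_pred (n : ℕ) {r : ℕ} (hr : 0 < r) :
    n.choose r * r = n * (n - 1).choose (r - 1) := by
  obtain ⟨j, rfl⟩ := Nat.exists_eq_add_one_of_ne_zero hr.ne'
  cases n with
  | zero => simp
  | succ t => rw [Nat.add_sub_cancel, Nat.add_sub_cancel, Nat.add_one_mul_choose_eq]

lemma sum_powersetCard_indicator {α M : Type*} [DecidableEq α] [AddCommMonoid M] {T : Finset α}
    {f : α → M} (hf : support f ⊆ ↑T) {r : ℕ} (hr : 0 < r) :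
    ∑ S ∈ T.powersetCard r, (S : Set α).indicator f = (#T - 1).choose (r - 1) • f := by
  funext i
  simp only [Finset.sum_apply, Set.indicator_apply, mem_coe, ← sum_filter, sum_const,
    Pi.smul_apply]
  by_cases hi : i ∈ T
  · have := card_filter_powersetCard_subset {i} T r (singleton_subset_iff.2 hi)
      (by rwa [card_singleton])
    simp_all [singleton_subset_iff]
  · simp [notMem_support.1 fun h => hi (hf h)]

lemma l2norm_nonneg {p : ℕ} (c : Fin p → ℝ) : 0 ≤ l2norm c := Real.sqrt_nonneg _

lemma l2norm_sq {p : ℕ} (c : Fin p → ℝ) : l2norm c ^ 2 = ∑ i, c i ^ 2 :=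
  Real.sq_sqrt (sum_nonneg fun _ _ => sq_nonneg _)

lemma l2norm_eq_norm {p : ℕ} (c : Fin p → ℝ) :
    l2norm c = ‖(WithLp.toLp 2 c : EuclideanSpace ℝ (Fin p))‖ := by
  simp [l2norm, EuclideanSpace.norm_eq]

lemma dotProduct_eq_inner {ι : Type*} [Fintype ι] (x y : ι → ℝ) :
    x ⬝ᵥ y = inner ℝ (WithLp.toLp 2 x : EuclideanSpace ℝ ι) (WithLp.toLp 2 y) := by
  simp [EuclideanSpace.inner_eq_star_dotProduct, dotProduct_comm]

lemma isSparse_of_support_subset_s11 {p k : ℕ} {c : Fin p → ℝ} {S : Finset (Fin p)}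
    (hS : support c ⊆ ↑S) (hk : #S ≤ k) : IsSparse k c := by
  refine le_trans (card_le_card fun i hi => ?_) hk
  exact hS (mem_filter.1 hi).2

section RestrictedOrthogonality

variable {n p : ℕ} (Φ : Matrix (Fin n) (Fin p) ℝ) {k k' : ℕ}

open scoped Matrix.Norms.L2Operator in
lemma abs_dotProduct_mulVec_le (c c' : Fin p → ℝ) :
    |(Φ *ᵥ c) ⬝ᵥ (Φ *ᵥ c')| ≤ ‖Φ‖ ^ 2 * l2norm c * l2norm c' := by
  rw [dotProduct_eq_inner, l2norm_eq_norm, l2norm_eq_norm]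
  calc _ ≤ _ := abs_real_inner_le_norm _ _
    _ ≤ (‖Φ‖ * ‖(WithLp.toLp 2 c : EuclideanSpace ℝ (Fin p))‖) *
          (‖Φ‖ * ‖(WithLp.toLp 2 c' : EuclideanSpace ℝ (Fin p))‖) :=
        mul_le_mul (Φ.l2_opNorm_mulVec _) (Φ.l2_opNorm_mulVec _) (norm_nonneg _) (by positivity)
    _ = _ := by ring

lemma roConst_le {θ : ℝ} (hθ : 0 ≤ θ)
    (h : ∀ c c' : Fin p → ℝ, IsSparse k c → IsSparse k' c' → (∀ i, c i = 0 ∨ c' i = 0) →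
      |(Φ *ᵥ c) ⬝ᵥ (Φ *ᵥ c')| ≤ θ * l2norm c * l2norm c') :
    roConst Φ k k' ≤ θ :=
  csInf_le ⟨0, fun _ h => h.1⟩ ⟨hθ, h⟩

lemma roConst_nonneg : 0 ≤ roConst Φ k k' :=
  Real.sInf_nonneg fun _ h => h.1

open scoped Matrix.Norms.L2Operator in
lemma abs_dotProduct_mulVec_le_roConst {c c' : Fin p → ℝ} (hc : IsSparse k c)
    (hc' : IsSparse k' c') (hdisj : ∀ i, c i = 0 ∨ c' i = 0) :
    |(Φ *ᵥ c) ⬝ᵥ (Φ *ᵥ c')| ≤ roConst Φ k k' * l2norm c * l2norm c' := by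
  have hK : 0 ≤ l2norm c * l2norm c' := mul_nonneg (l2norm_nonneg c) (l2norm_nonneg c')
  rw [mul_assoc]
  rcases hK.eq_or_lt with hK | hK
  · simpa [mul_assoc, ← hK] using abs_dotProduct_mulVec_le Φ c c'
  · rw [← div_le_iff₀ hK]
    refine le_csInf ⟨‖Φ‖ ^ 2, sq_nonneg _, fun c c' _ _ _ => abs_dotProduct_mulVec_le Φ c c'⟩ ?_
    rintro θ ⟨-, hθ⟩
    rw [div_le_iff₀ hK, ← mul_assoc]
    exact hθ c c' hc hc' hdisj

end RestrictedOrthogonality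
section Averaging

variable {n p : ℕ} (Φ : Matrix (Fin n) (Fin p) ℝ) {c c' : Fin p → ℝ} {T : Finset (Fin p)}
  {r : ℕ}

lemma choose_mul_dotProduct_mulVec_eq_sum (hT : support c' ⊆ ↑T) (hr : 0 < r) :
    ((#T - 1).choose (r - 1) : ℝ) * (Φ *ᵥ c) ⬝ᵥ (Φ *ᵥ c') =
      ∑ S ∈ T.powersetCard r, (Φ *ᵥ c) ⬝ᵥ (Φ *ᵥ (S : Set (Fin p)).indicator c') := by
  rw [← dotProduct_sum, ← mulVec_sum, sum_powersetCard_indicator hT hr,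
    ← Nat.cast_smul_eq_nsmul ℝ, mulVec_smul, dotProduct_smul, smul_eq_mul]

lemma sum_l2norm_indicator_sq (hT : support c' ⊆ ↑T) (hr : 0 < r) :
    ∑ S ∈ T.powersetCard r, l2norm ((S : Set (Fin p)).indicator c') ^ 2 =
      (#T - 1).choose (r - 1) * l2norm c' ^ 2 := by
  have hT2 : support (c' ^ 2) ⊆ ↑T := by rwa [support_pow' _ two_ne_zero]
  have := congrFun (sum_powersetCard_indicator hT2 hr)
  simp only [l2norm_sq, mul_sum]
  rw [sum_comm]
  refine sum_congr rfl fun i _ => ?_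
  simpa [Set.indicator_apply, apply_ite (· ^ 2)] using this i

lemma sum_l2norm_indicator_le (hT : support c' ⊆ ↑T) (hr : 0 < r) :
    ∑ S ∈ T.powersetCard r, l2norm ((S : Set (Fin p)).indicator c') ≤
      √(#T / r) * (#T - 1).choose (r - 1) * l2norm c' := by
  have hcard : (#(T.powersetCard r) : ℝ) = #T / r * (#T - 1).choose (r - 1) := by
    rw [div_mul_eq_mul_div, eq_div_iff (by positivity), card_powersetCard]
    exact_mod_cast Nat.choose_mul_eq_mul_choose_pred _ hr
  rw [← pow_le_pow_iff_left₀ (sum_nonneg fun _ _ => l2norm_nonneg _)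
    (mul_nonneg (by positivity) (l2norm_nonneg c')) two_ne_zero]
  calc _ ≤ #(T.powersetCard r) *
        ∑ S ∈ T.powersetCard r, l2norm ((S : Set (Fin p)).indicator c') ^ 2 :=
      sq_sum_le_card_mul_sum_sq
    _ = _ := by
      rw [sum_l2norm_indicator_sq hT hr, hcard, mul_pow, mul_pow, Real.sq_sqrt (by positivity)]
      ring

lemma abs_dotProduct_mulVec_le_of_support_subset {k : ℕ} (hc : IsSparse k c)
    (hT : support c' ⊆ ↑T) (hdisj : ∀ i, c i = 0 ∨ c' i = 0) (hr : 0 < r) (hrT : r ≤ #T) :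
    |(Φ *ᵥ c) ⬝ᵥ (Φ *ᵥ c')| ≤ √(#T / r) * roConst Φ k r * l2norm c * l2norm c' := by
  set D : ℝ := Nat.cast ((#T - 1).choose (r - 1))
  have hD : 0 < D := by unfold D; exact_mod_cast Nat.choose_pos (by omega)
  have hθc : 0 ≤ roConst Φ k r * l2norm c := mul_nonneg (roConst_nonneg Φ) (l2norm_nonneg c)
  refine le_of_mul_le_mul_left ?_ hD
  calc D * |(Φ *ᵥ c) ⬝ᵥ (Φ *ᵥ c')|
      = |∑ S ∈ T.powersetCard r, (Φ *ᵥ c) ⬝ᵥ (Φ *ᵥ (S : Set (Fin p)).indicator c')| := by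
        rw [← choose_mul_dotProduct_mulVec_eq_sum Φ hT hr, abs_mul, abs_of_pos hD]
    _ ≤ ∑ S ∈ T.powersetCard r, |(Φ *ᵥ c) ⬝ᵥ (Φ *ᵥ (S : Set (Fin p)).indicator c')| :=
        abs_sum_le_sum_abs _ _
    _ ≤ ∑ S ∈ T.powersetCard r,
          roConst Φ k r * l2norm c * l2norm ((S : Set (Fin p)).indicator c') := by
        refine sum_le_sum fun S hS => abs_dotProduct_mulVec_le_roConst Φ hc ?_ fun i => ?_
        · exact isSparse_of_support_subset_s11 (Set.support_indicator_subset)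
            (mem_powersetCard.1 hS).2.le
        · rcases hdisj i with h | h <;> simp [h]
    _ = roConst Φ k r * l2norm c *
          ∑ S ∈ T.powersetCard r, l2norm ((S : Set (Fin p)).indicator c') := by
        rw [mul_sum]
    _ ≤ roConst Φ k r * l2norm c * (√(#T / r) * D * l2norm c') := by
        gcongr
        exact sum_l2norm_indicator_le hT hr
    _ = D * (√(#T / r) * roConst Φ k r * l2norm c * l2norm c') := by ring

end Averaging

theorem square_root_lifting_general (n p k k' m : ℕ) (a : ℝ) (Φ : Matrix (Fin n) (Fin p) ℝ)
    (ha : 1 ≤ a) (hm : (m : ℝ) = a * (k' : ℝ)) :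
    roConst Φ k m ≤ Real.sqrt a * roConst Φ k k' := by
  refine roConst_le Φ (mul_nonneg (Real.sqrt_nonneg a) (roConst_nonneg Φ))
    fun c c' hc hc' hdisj => ?_
  have hθ := roConst_nonneg Φ (k := k) (k' := k')
  have hc₀ := l2norm_nonneg c
  have hc'₀ := l2norm_nonneg c'
  by_cases hsparse : IsSparse k' c'
  · calc |(Φ *ᵥ c) ⬝ᵥ (Φ *ᵥ c')| ≤ 1 * roConst Φ k k' * l2norm c * l2norm c' := by
          simpa using abs_dotProduct_mulVec_le_roConst Φ hc hsparse hdisj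
      _ ≤ √a * roConst Φ k k' * l2norm c * l2norm c' := by
          gcongr
          exact Real.one_le_sqrt.2 ha
  set T := univ.filter fun i => c' i ≠ 0
  have hT : support c' ⊆ ↑T := fun i hi => mem_filter.2 ⟨mem_univ i, hi⟩
  have hk'T : k' < #T := not_le.1 hsparse
  have hTm : #T ≤ m := hc'
  have hk' : 0 < k' := Nat.pos_of_ne_zero fun h => by
    subst h
    simp only [CharP.cast_eq_zero, mul_zero, Nat.cast_eq_zero] at hm
    omega
  calc |(Φ *ᵥ c) ⬝ᵥ (Φ *ᵥ c')| ≤ √(#T / k') * roConst Φ k k' * l2norm c * l2norm c' :=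
        abs_dotProduct_mulVec_le_of_support_subset Φ hc hT hdisj hk' hk'T.le
    _ ≤ √a * roConst Φ k k' * l2norm c * l2norm c' := by
        gcongr
        rw [div_le_iff₀ (by exact_mod_cast hk'), ← hm]
        exact_mod_cast hTm

theorem square_root_lifting (n p k k' m : ℕ) (a : ℝ) (Φ : Matrix (Fin n) (Fin p) ℝ)
    (hk : 0 < k) (hk' : 0 < k') (ha : 1 ≤ a) (hm : (m : ℝ) = a * (k' : ℝ))
    (hp : k + m ≤ p) :
    roConst Φ k m ≤ Real.sqrt a * roConst Φ k k' :=
  square_root_lifting_general n p k k' m a Φ ha hm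
end

section
/- For any n×p matrix Φ and positive integer k with 3k ≤ p, δ_{3k}(Φ) ≤ (1/3)·δ_k(Φ) + (√2 + 2/3)·δ_{2k}(Φ). -/
/-!
Split a `3k`-sparse `c` as `x + y`, where `y` keeps the `k` largest entries of `c`; then `x` is
`2k`-sparse and `‖x‖² ≤ 2‖y‖²`. In
`‖Φc‖² - ‖c‖² = (‖Φx‖² - ‖x‖²) + (‖Φy‖² - ‖y‖²) + 2⟪Φx, Φy⟫`
the first two terms are bounded by `δ_{2k}‖x‖²` and `δ_k‖y‖²`, and the cross term by
`θ_{2k,k}‖x‖‖y‖ ≤ √2 δ_{2k}‖x‖‖y‖` (polarization). Since `δ_k ≤ δ_{2k}` and `‖x‖² ≤ 2‖y‖²`,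
`δ_{2k}‖x‖² + δ_k‖y‖² ≤ (δ_k/3 + 2δ_{2k}/3)‖c‖²`.
-/

open Finset Matrix

section TopSubset

variable {ι : Type*}

theorem card_mul_sum_le_card_mul_sum_of_forall_le {A B : Finset ι} {f : ι → ℝ}
    (h : ∀ j ∈ A, ∀ i ∈ B, f j ≤ f i) : #B * ∑ j ∈ A, f j ≤ #A * ∑ i ∈ B, f i :=
  calc (#B : ℝ) * ∑ j ∈ A, f j = ∑ j ∈ A, ∑ _i ∈ B, f j := by rw [mul_sum]; simp [mul_comm]
    _ ≤ ∑ _j ∈ A, ∑ i ∈ B, f i := sum_le_sum fun j hj => sum_le_sum fun i hi => h j hj i hi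
    _ = #A * ∑ i ∈ B, f i := by simp

variable [DecidableEq ι]

/-- Take a `k`-subset of maximal `f`-sum: exchanging one of its elements for an outside one
cannot increase the sum. -/
theorem exists_subset_card_eq_forall_sdiff_le (s : Finset ι) (f : ι → ℝ) {k : ℕ}
    (hk : k ≤ #s) : ∃ T ⊆ s, #T = k ∧ ∀ j ∈ s \ T, ∀ i ∈ T, f j ≤ f i := by
  obtain ⟨T, hT, hmax⟩ := (s.powersetCard k).exists_max_image (fun T => ∑ i ∈ T, f i)
    (powersetCard_nonempty.2 hk)
  obtain ⟨hTs, hTk⟩ := mem_powersetCard.1 hT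
  refine ⟨T, hTs, hTk, fun j hj i hi => ?_⟩
  obtain ⟨hjs, hjT⟩ := mem_sdiff.1 hj
  have hjT' : j ∉ T.erase i := fun h => hjT (mem_of_mem_erase h)
  have hswap : insert j (T.erase i) ∈ s.powersetCard k := by
    refine mem_powersetCard.2 ⟨insert_subset hjs ((erase_subset i T).trans hTs), ?_⟩
    have : 0 < #T := card_pos.2 ⟨i, hi⟩
    rw [card_insert_of_notMem hjT', card_erase_of_mem hi]
    omega
  have hle := hmax _ hswap
  rw [sum_insert hjT'] at hle
  linarith [add_sum_erase T f hi]

theorem exists_subset_sum_sdiff_le (s : Finset ι) {f : ι → ℝ} (hf : ∀ i ∈ s, 0 ≤ f i)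
    {k m : ℕ} (hs : #s ≤ (m + 1) * k) :
    ∃ T ⊆ s, #T = min k #s ∧ ∑ i ∈ s \ T, f i ≤ m * ∑ i ∈ T, f i := by
  obtain ⟨T, hTs, hTcard, hle⟩ := exists_subset_card_eq_forall_sdiff_le s f (min_le_right k #s)
  refine ⟨T, hTs, hTcard, ?_⟩
  have hsumT : 0 ≤ ∑ i ∈ T, f i := sum_nonneg fun i hi => hf i (hTs hi)
  rw [add_one_mul] at hs
  rcases le_or_gt #s k with hsk | hks
  · rw [eq_of_subset_of_card_le hTs (by omega), sdiff_self, bot_eq_empty, sum_empty]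
    exact mul_nonneg m.cast_nonneg (sum_nonneg hf)
  · have hk : (0 : ℝ) < k := by exact_mod_cast Nat.pos_of_ne_zero (by rintro rfl; simp_all)
    have hkT : #T = k := by omega
    have hsdiff : (#(s \ T) : ℝ) ≤ m * k := by
      rw [card_sdiff_of_subset hTs]
      exact_mod_cast (show #s - #T ≤ m * k by omega)
    have hcmp := card_mul_sum_le_card_mul_sum_of_forall_le hle
    rw [hkT] at hcmp
    refine le_of_mul_le_mul_left (hcmp.trans ?_) hk
    calc _ ≤ (m * k : ℝ) * ∑ i ∈ T, f i := mul_le_mul_of_nonneg_right hsdiff hsumT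
      _ = _ := by ring

end TopSubset

section SparseVectors

variable {p : ℕ}

noncomputable def vecSupport (c : Fin p → ℝ) : Finset (Fin p) := {i | c i ≠ 0}

theorem IsSparse.mono {k k' : ℕ} {c : Fin p → ℝ} (hc : IsSparse k c) (h : k ≤ k') :
    IsSparse k' c :=
  hc.trans h

theorem IsSparse.add {k k' : ℕ} {a b : Fin p → ℝ} (ha : IsSparse k a) (hb : IsSparse k' b) :
    IsSparse (k + k') (a + b) := by
  refine (card_le_card fun i hi => ?_).trans ((card_union_le _ _).trans (add_le_add ha hb))
  simp only [mem_filter, mem_union, mem_univ, true_and, Pi.add_apply] at hi ⊢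
  by_contra! h
  simp [h.1, h.2] at hi

theorem IsSparse.smul {k : ℕ} {a : Fin p → ℝ} (ha : IsSparse k a) (t : ℝ) :
    IsSparse k (t • a) := by
  refine (card_le_card fun i hi => ?_).trans ha
  simp only [mem_filter, mem_univ, true_and, Pi.smul_apply, smul_eq_mul] at hi ⊢
  exact right_ne_zero_of_mul hi

theorem IsSparse.sub {k k' : ℕ} {a b : Fin p → ℝ} (ha : IsSparse k a) (hb : IsSparse k' b) :
    IsSparse (k + k') (a - b) := by
  simpa [sub_eq_add_neg] using ha.add (hb.smul (-1))

theorem isSparse_indicator (T : Finset (Fin p)) (c : Fin p → ℝ) :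
    IsSparse #T ((T : Set (Fin p)).indicator c) :=
  card_le_card fun _ hi => mem_coe.1 (Set.indicator_apply_ne_zero.1 (mem_filter.1 hi).2).1

theorem indicator_sdiff_add_indicator (c : Fin p → ℝ) (T : Finset (Fin p)) :
    (↑(vecSupport c \ T) : Set (Fin p)).indicator c + (T : Set (Fin p)).indicator c = c := by
  funext i
  by_cases hi : i ∈ T
  · simp [hi]
  · by_cases hc : c i = 0 <;> simp [vecSupport, hi, hc]

theorem indicator_sdiff_eq_zero_or_indicator_eq_zero (S T : Finset (Fin p)) (c : Fin p → ℝ)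
    (i : Fin p) :
    (↑(S \ T) : Set (Fin p)).indicator c i = 0 ∨ (T : Set (Fin p)).indicator c i = 0 := by
  by_cases hi : i ∈ T <;> simp [Set.indicator_apply, hi]

theorem indicator_dotProduct_self (T : Finset (Fin p)) (c : Fin p → ℝ) :
    (T : Set (Fin p)).indicator c ⬝ᵥ (T : Set (Fin p)).indicator c = ∑ i ∈ T, c i ^ 2 := by
  simp [dotProduct, Set.indicator_apply, sq, sum_ite_mem]

theorem IsSparse.exists_add {k k' : ℕ} {c : Fin p → ℝ} (hc : IsSparse (k + k') c) :
    ∃ a b, IsSparse k a ∧ IsSparse k' b ∧ (∀ i, a i = 0 ∨ b i = 0) ∧ a + b = c := by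
  obtain ⟨T, hTs, hT⟩ := exists_subset_card_eq (min_le_right k' #(vecSupport c))
  refine ⟨_, _, (isSparse_indicator _ c).mono ?_, (isSparse_indicator T c).mono (by omega),
    indicator_sdiff_eq_zero_or_indicator_eq_zero _ T c, indicator_sdiff_add_indicator c T⟩
  have : #(vecSupport c) ≤ k + k' := hc
  rw [card_sdiff_of_subset hTs]
  omega

/-- Splitting off the `k` largest entries of an `(m + 1) k`-sparse vector. -/
theorem IsSparse.exists_add_dotProduct_self_le {k m : ℕ} {c : Fin p → ℝ}
    (hc : IsSparse ((m + 1) * k) c) :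
    ∃ x y, IsSparse (m * k) x ∧ IsSparse k y ∧ (∀ i, x i = 0 ∨ y i = 0) ∧ x + y = c ∧
      x ⬝ᵥ x ≤ m * (y ⬝ᵥ y) := by
  obtain ⟨T, hTs, hT, hmass⟩ :=
    exists_subset_sum_sdiff_le (vecSupport c) (f := fun i => c i ^ 2) (fun i _ => sq_nonneg _) hc
  refine ⟨_, _, (isSparse_indicator _ c).mono ?_, (isSparse_indicator T c).mono (by omega),
    indicator_sdiff_eq_zero_or_indicator_eq_zero _ T c, indicator_sdiff_add_indicator c T, ?_⟩
  · have hcard : #(vecSupport c) ≤ m * k + k := by rw [← add_one_mul]; exact hc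
    rw [card_sdiff_of_subset hTs]
    omega
  · simpa only [indicator_dotProduct_self] using hmass

end SparseVectors

theorem sqrt_add_sqrt_le_sqrt_two_mul {u v : ℝ} (hu : 0 ≤ u) (hv : 0 ≤ v) :
    √u + √v ≤ √2 * √(u + v) := by
  rw [← Real.sqrt_mul zero_le_two]
  refine Real.le_sqrt_of_sq_le ?_
  nlinarith [sq_nonneg (√u - √v), Real.sq_sqrt hu, Real.sq_sqrt hv]

theorem dotProduct_self_nonneg {ι : Type*} [Fintype ι] (v : ι → ℝ) : 0 ≤ v ⬝ᵥ v :=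
  sum_nonneg fun i _ => mul_self_nonneg (v i)

theorem sum_sq_eq_dotProduct_self {ι : Type*} [Fintype ι] (v : ι → ℝ) :
    ∑ i, v i ^ 2 = v ⬝ᵥ v := by
  simp [dotProduct, sq]

theorem dotProduct_eq_zero_of_forall_eq_zero_or {ι : Type*} [Fintype ι] {a b : ι → ℝ}
    (h : ∀ i, a i = 0 ∨ b i = 0) : a ⬝ᵥ b = 0 :=
  sum_eq_zero fun i _ => by rcases h i with h | h <;> simp [h]

theorem add_dotProduct_add_self {ι : Type*} [Fintype ι] (u v : ι → ℝ) :
    (u + v) ⬝ᵥ (u + v) = u ⬝ᵥ u + 2 * (u ⬝ᵥ v) + v ⬝ᵥ v := by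
  simp only [add_dotProduct, dotProduct_add, dotProduct_comm v u]
  ring

theorem add_dotProduct_add_self_of_forall_eq_zero_or {ι : Type*} [Fintype ι] {u v : ι → ℝ}
    (h : ∀ i, u i = 0 ∨ v i = 0) : (u + v) ⬝ᵥ (u + v) = u ⬝ᵥ u + v ⬝ᵥ v := by
  rw [add_dotProduct_add_self, dotProduct_eq_zero_of_forall_eq_zero_or h, mul_zero, add_zero]

theorem sub_dotProduct_sub_self {ι : Type*} [Fintype ι] (u v : ι → ℝ) :
    (u - v) ⬝ᵥ (u - v) = u ⬝ᵥ u - 2 * (u ⬝ᵥ v) + v ⬝ᵥ v := by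
  simp only [sub_dotProduct, dotProduct_sub, dotProduct_comm v u]
  ring

section RestrictedIsometry

variable {n p : ℕ} (Φ : Matrix (Fin n) (Fin p) ℝ)

def IsRipBound (k : ℕ) (δ : ℝ) : Prop :=
  ∀ c : Fin p → ℝ, IsSparse k c → |Φ *ᵥ c ⬝ᵥ Φ *ᵥ c - c ⬝ᵥ c| ≤ δ * (c ⬝ᵥ c)

theorem ripConst_eq_sInf (k : ℕ) : ripConst Φ k = sInf {δ | 0 ≤ δ ∧ IsRipBound Φ k δ} := by
  refine congrArg sInf (Set.ext fun δ => and_congr_right fun _ => forall_congr' fun c => ?_)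
  simp only [sum_sq_eq_dotProduct_self, abs_sub_le_iff]
  exact imp_congr_right fun _ => by constructor <;> rintro ⟨h₁, h₂⟩ <;> constructor <;> linarith

theorem mulVec_dotProduct_self_le (c : Fin p → ℝ) :
    Φ *ᵥ c ⬝ᵥ Φ *ᵥ c ≤ (∑ i, ∑ j, Φ i j ^ 2) * (c ⬝ᵥ c) := by
  rw [← sum_sq_eq_dotProduct_self, sum_mul]
  refine sum_le_sum fun i _ => ?_
  rw [← sum_sq_eq_dotProduct_self]
  exact sum_mul_sq_le_sq_mul_sq univ (Φ i) c

theorem isClosed_setOf_isRipBound (k : ℕ) : IsClosed {δ | 0 ≤ δ ∧ IsRipBound Φ k δ} := by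
  simp only [IsRipBound, Set.ofPred_and, Set.ofPred_forall]
  exact isClosed_Ici.inter <| isClosed_iInter fun c => isClosed_iInter fun _ =>
    isClosed_le continuous_const (continuous_id.mul continuous_const)

theorem ripConst_mem (k : ℕ) : ripConst Φ k ∈ {δ | 0 ≤ δ ∧ IsRipBound Φ k δ} := by
  rw [ripConst_eq_sInf]
  refine (isClosed_setOf_isRipBound Φ k).csInf_mem ?_ ⟨0, fun _ hδ => hδ.1⟩
  have hF : 0 ≤ ∑ i, ∑ j, Φ i j ^ 2 := by positivity
  refine ⟨1 + ∑ i, ∑ j, Φ i j ^ 2, by positivity, fun c _ => abs_sub_le_iff.2 ⟨?_, ?_⟩⟩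
  · nlinarith [mulVec_dotProduct_self_le Φ c, dotProduct_self_nonneg c]
  · nlinarith [dotProduct_self_nonneg (Φ *ᵥ c), dotProduct_self_nonneg c]

theorem ripConst_nonneg (k : ℕ) : 0 ≤ ripConst Φ k := (ripConst_mem Φ k).1

theorem isRipBound_ripConst (k : ℕ) : IsRipBound Φ k (ripConst Φ k) := (ripConst_mem Φ k).2

theorem ripConst_le {k : ℕ} {δ : ℝ} (hδ : 0 ≤ δ) (h : IsRipBound Φ k δ) : ripConst Φ k ≤ δ := by
  rw [ripConst_eq_sInf]
  exact csInf_le ⟨0, fun _ hδ => hδ.1⟩ ⟨hδ, h⟩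

theorem ripConst_mono {k k' : ℕ} (h : k ≤ k') : ripConst Φ k ≤ ripConst Φ k' :=
  ripConst_le Φ (ripConst_nonneg Φ k') fun c hc => isRipBound_ripConst Φ k' c (hc.mono h)

theorem abs_mulVec_dotProduct_le_half_add {k k' : ℕ} {a b : Fin p → ℝ} (ha : IsSparse k a)
    (hb : IsSparse k' b) (hab : ∀ i, a i = 0 ∨ b i = 0) :
    |Φ *ᵥ a ⬝ᵥ Φ *ᵥ b| ≤ ripConst Φ (k + k') * ((a ⬝ᵥ a + b ⬝ᵥ b) / 2) := by
  have hplus := isRipBound_ripConst Φ (k + k') _ (ha.add hb)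
  have hminus := isRipBound_ripConst Φ (k + k') _ (ha.sub hb)
  rw [mulVec_add, add_dotProduct_add_self, add_dotProduct_add_self,
    dotProduct_eq_zero_of_forall_eq_zero_or hab] at hplus
  rw [mulVec_sub, sub_dotProduct_sub_self, sub_dotProduct_sub_self,
    dotProduct_eq_zero_of_forall_eq_zero_or hab] at hminus
  rw [abs_le] at hplus hminus ⊢
  constructor <;> linarith [hplus.1, hplus.2, hminus.1, hminus.2]

theorem abs_mulVec_dotProduct_le {k k' : ℕ} {a b : Fin p → ℝ} (ha : IsSparse k a)
    (hb : IsSparse k' b) (hab : ∀ i, a i = 0 ∨ b i = 0) :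
    |Φ *ᵥ a ⬝ᵥ Φ *ᵥ b| ≤ ripConst Φ (k + k') * (√(a ⬝ᵥ a) * √(b ⬝ᵥ b)) := by
  set α := √(a ⬝ᵥ a)
  set β := √(b ⬝ᵥ b)
  by_cases h0 : α * β = 0
  · rcases mul_eq_zero.1 h0 with h | h <;>
      simp_all [α, β, Real.sqrt_eq_zero (dotProduct_self_nonneg _)]
  have hαβ : 0 < α * β := lt_of_le_of_ne (by positivity) (Ne.symm h0)
  -- rescaling `a` by `β` and `b` by `α` makes the AM-GM bound tight
  have h := abs_mulVec_dotProduct_le_half_add Φ (ha.smul β) (hb.smul α)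
    fun i => (hab i).imp (by simp [·]) (by simp [·])
  have hA : a ⬝ᵥ a = α ^ 2 := (Real.sq_sqrt (dotProduct_self_nonneg a)).symm
  have hB : b ⬝ᵥ b = β ^ 2 := (Real.sq_sqrt (dotProduct_self_nonneg b)).symm
  simp only [mulVec_smul, smul_dotProduct, dotProduct_smul, smul_eq_mul, abs_mul, hA, hB] at h
  rw [abs_of_nonneg (Real.sqrt_nonneg _), abs_of_nonneg (Real.sqrt_nonneg _)] at h
  refine le_of_mul_le_mul_left ?_ hαβ
  calc α * β * |Φ *ᵥ a ⬝ᵥ Φ *ᵥ b| = α * (β * |Φ *ᵥ a ⬝ᵥ Φ *ᵥ b|) := by ring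
    _ ≤ _ := h
    _ = α * β * (ripConst Φ (k + k') * (α * β)) := by ring

theorem abs_mulVec_dotProduct_le_sqrt_two_mul {k k' : ℕ} {x y : Fin p → ℝ}
    (hx : IsSparse (k + k) x) (hy : IsSparse k' y) (hxy : ∀ i, x i = 0 ∨ y i = 0) :
    |Φ *ᵥ x ⬝ᵥ Φ *ᵥ y| ≤ √2 * ripConst Φ (k + k') * (√(x ⬝ᵥ x) * √(y ⬝ᵥ y)) := by
  obtain ⟨a, b, ha, hb, hab, rfl⟩ := hx.exists_add
  have hay : ∀ i, a i = 0 ∨ y i = 0 := fun i => by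
    rcases hab i with h | h <;> rcases hxy i with h' | h' <;> simp_all
  have hby : ∀ i, b i = 0 ∨ y i = 0 := fun i => by
    rcases hab i with h | h <;> rcases hxy i with h' | h' <;> simp_all
  have hnorm : √(a ⬝ᵥ a) + √(b ⬝ᵥ b) ≤ √2 * √((a + b) ⬝ᵥ (a + b)) := by
    rw [add_dotProduct_add_self_of_forall_eq_zero_or hab]
    exact sqrt_add_sqrt_le_sqrt_two_mul (dotProduct_self_nonneg a) (dotProduct_self_nonneg b)
  have hδ := ripConst_nonneg Φ (k + k')
  calc |Φ *ᵥ (a + b) ⬝ᵥ Φ *ᵥ y| ≤ |Φ *ᵥ a ⬝ᵥ Φ *ᵥ y| + |Φ *ᵥ b ⬝ᵥ Φ *ᵥ y| := by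
        rw [mulVec_add, add_dotProduct]
        exact abs_add_le _ _
    _ ≤ ripConst Φ (k + k') * (√(a ⬝ᵥ a) * √(y ⬝ᵥ y)) +
        ripConst Φ (k + k') * (√(b ⬝ᵥ b) * √(y ⬝ᵥ y)) :=
        add_le_add (abs_mulVec_dotProduct_le Φ ha hy hay) (abs_mulVec_dotProduct_le Φ hb hy hby)
    _ = ripConst Φ (k + k') * √(y ⬝ᵥ y) * (√(a ⬝ᵥ a) + √(b ⬝ᵥ b)) := by ring
    _ ≤ ripConst Φ (k + k') * √(y ⬝ᵥ y) * (√2 * √((a + b) ⬝ᵥ (a + b))) := by gcongr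
    _ = _ := by ring

theorem abs_mulVec_add_dotProduct_self_sub_le {k₁ k₂ : ℕ} {x y : Fin p → ℝ}
    (hx : IsSparse k₁ x) (hy : IsSparse k₂ y) (hxy : ∀ i, x i = 0 ∨ y i = 0) :
    |Φ *ᵥ (x + y) ⬝ᵥ Φ *ᵥ (x + y) - (x + y) ⬝ᵥ (x + y)| ≤
      ripConst Φ k₁ * (x ⬝ᵥ x) + ripConst Φ k₂ * (y ⬝ᵥ y) + 2 * |Φ *ᵥ x ⬝ᵥ Φ *ᵥ y| := by
  rw [mulVec_add, add_dotProduct_add_self, add_dotProduct_add_self_of_forall_eq_zero_or hxy]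
  calc _ = |(Φ *ᵥ x ⬝ᵥ Φ *ᵥ x - x ⬝ᵥ x) + (Φ *ᵥ y ⬝ᵥ Φ *ᵥ y - y ⬝ᵥ y)
        + 2 * (Φ *ᵥ x ⬝ᵥ Φ *ᵥ y)| := by ring_nf
    _ ≤ _ := by
      rw [← abs_two, ← abs_mul, abs_two]
      exact (abs_add_le _ _).trans (add_le_add ((abs_add_le _ _).trans
        (add_le_add (isRipBound_ripConst Φ k₁ x hx) (isRipBound_ripConst Φ k₂ y hy))) le_rfl)

end RestrictedIsometry

theorem ripConst_three_le_general (n p k : ℕ) (Φ : Matrix (Fin n) (Fin p) ℝ) :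
    ripConst Φ (3 * k) ≤
      (1/3 : ℝ) * ripConst Φ k + (Real.sqrt 2 + 2/3) * ripConst Φ (2 * k) := by
  have hδ₁ := ripConst_nonneg Φ k
  have hδ₂ := ripConst_nonneg Φ (2 * k)
  have hmono : ripConst Φ k ≤ ripConst Φ (2 * k) := ripConst_mono Φ (by omega)
  refine ripConst_le Φ (by positivity) fun c hc => ?_
  obtain ⟨x, y, hx, hy, hxy, rfl, hmass⟩ :=
    IsSparse.exists_add_dotProduct_self_le (m := 2) (show IsSparse ((2 + 1) * k) c from hc)
  push_cast at hmass
  have hX := dotProduct_self_nonneg x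
  have hY := dotProduct_self_nonneg y
  have hcross : 2 * |Φ *ᵥ x ⬝ᵥ Φ *ᵥ y| ≤ √2 * ripConst Φ (2 * k) * (x ⬝ᵥ x + y ⬝ᵥ y) := by
    have h := abs_mulVec_dotProduct_le_sqrt_two_mul Φ (by rwa [← two_mul]) hy hxy
    rw [← two_mul] at h
    nlinarith [sq_nonneg (√(x ⬝ᵥ x) - √(y ⬝ᵥ y)), Real.sq_sqrt hX, Real.sq_sqrt hY,
      mul_nonneg (Real.sqrt_nonneg 2) hδ₂]
  refine (abs_mulVec_add_dotProduct_self_sub_le Φ hx hy hxy).trans ?_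
  rw [add_dotProduct_add_self_of_forall_eq_zero_or hxy]
  nlinarith [mul_nonneg (sub_nonneg.2 hmono) (by linarith : 0 ≤ 2 * (y ⬝ᵥ y) - x ⬝ᵥ x)]

theorem ripConst_three_le (n p k : ℕ) (Φ : Matrix (Fin n) (Fin p) ℝ)
    (hk : 0 < k) (hp : 3 * k ≤ p) :
    ripConst Φ (3 * k) ≤
      (1/3 : ℝ) * ripConst Φ k + (Real.sqrt 2 + 2/3) * ripConst Φ (2 * k) :=
  ripConst_three_le_general n p k Φ
end
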